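/- The set of 24 rules for the passive fixed switch, crossed by a simple or a double locomotive arriving from either side (Table 14 of the paper, rules 119–142), is rotation-consistent. The rules are: (W,WBWBWBBBWB,W), (W,WBWWWBBWWW,W), (W,WBWWBWBBWW,W), (W,RBWBWBBBWB,R), (W,WBWWBRBBBW,W), (R,WBWBWBBBWB,W), (B,RWWWBWWWWW,B), (W,WBRBWBBBWB,W), (B,WWWWBWRWWW,B), (R,WBWWBWBBWW,W), (W,RBWWWWBWWW,W), (W,RWWWWBWWWW,W), (W,RBWWBWBBWW,W), (W,WBWBRBBBWB,R), (W,WBWWBBRWBB,W), (R,RBWBWBBBWB,R), (W,RBWWBRBBBW,W), (R,WBRBWBBBWB,W), (B,RWWWBWRWWW,B), (W,RBWWWBBWWW,W), (R,RBWWBWBBWW,W), (R,WBWBRBBBWB,R), (W,RBWWBBRWBB,W), (B,RWWWBRWWWW,B). -/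

import Mathlib

/-- The three states of the cellular automaton: W (white, quiescent),
B (blue) and R (red). -/
inductive CAState : Type
  | W | B | R
  deriving DecidableEq, Repr

open CAState

/-- A neighbourhood: a word of length 10 over {W,B,R}; positions 0-4
(paper's 1-5) are the side-neighbours, positions 5-9 (paper's 6-10)
the vertex-neighbours. -/
abbrev Nbhd := Fin 10 → CAState

/-- Build a neighbourhood from its ten letters. -/
def nb (a b c d e f g h i j : CAState) : Nbhd := ![a, b, c, d, e, f, g, h, i, j]

/-- The rotation ρ: simultaneous cyclic shift of the side part and of the
vertex part: ρ(x1…x10) = x2x3x4x5x1x7x8x9x10x6. -/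
def rho (n : Nbhd) : Nbhd := fun i => n (![1, 2, 3, 4, 0, 6, 7, 8, 9, 5] i)

/-- Two neighbourhoods are rotation-equivalent if one is ρ^k of the other. -/
def RotEquiv (n m : Nbhd) : Prop := ∃ k : ℕ, n = rho^[k] m

/-- A rule: (current state, neighbourhood, new state). -/
abbrev Rule := CAState × Nbhd × CAState

/-- A set of rules is rotation-consistent if any two rules with the same
current state and rotation-equivalent neighbourhoods have the same new
state. -/
def RotationConsistent (L : List Rule) : Prop :=
  ∀ r₁ ∈ L, ∀ r₂ ∈ L, r₁.1 = r₂.1 → RotEquiv r₁.2.1 r₂.2.1 → r₁.2.2 = r₂.2.2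

/-! Since `ρ⁵ = id`, rotation-equivalence only needs the exponents `k < 5`, so it is decidable;
the consistency of the finite table is then a finite check over pairs of rules. -/

lemma isPeriodicPt_rho_five (n : Nbhd) : Function.IsPeriodicPt rho 5 n := by
  funext i
  fin_cases i <;> rfl

lemma rotEquiv_iff_exists_lt_five (n m : Nbhd) : RotEquiv n m ↔ ∃ k < 5, n = rho^[k] m := by
  constructor
  · rintro ⟨k, rfl⟩
    exact ⟨k % 5, Nat.mod_lt _ (by norm_num),
      ((isPeriodicPt_rho_five m).iterate_mod_apply k).symm⟩
  · rintro ⟨k, -, rfl⟩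
    exact ⟨k, rfl⟩

instance (n m : Nbhd) : Decidable (RotEquiv n m) :=
  decidable_of_iff _ (rotEquiv_iff_exists_lt_five n m).symm

instance : DecidablePred RotationConsistent := fun L => by
  unfold RotationConsistent
  infer_instance

theorem fixed_switch_rules_rotation_consistent :
    RotationConsistent [
    (W, nb W B W B W B B B W B, W),
    (W, nb W B W W W B B W W W, W),
    (W, nb W B W W B W B B W W, W),
    (W, nb R B W B W B B B W B, R),
    (W, nb W B W W B R B B B W, W),
    (R, nb W B W B W B B B W B, W),
    (B, nb R W W W B W W W W W, B),
    (W, nb W B R B W B B B W B, W),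
    (B, nb W W W W B W R W W W, B),
    (R, nb W B W W B W B B W W, W),
    (W, nb R B W W W W B W W W, W),
    (W, nb R W W W W B W W W W, W),
    (W, nb R B W W B W B B W W, W),
    (W, nb W B W B R B B B W B, R),
    (W, nb W B W W B B R W B B, W),
    (R, nb R B W B W B B B W B, R),
    (W, nb R B W W B R B B B W, W),
    (R, nb W B R B W B B B W B, W),
    (B, nb R W W W B W R W W W, B),
    (W, nb R B W W W B B W W W, W),
    (R, nb R B W W B W B B W W, W),
    (R, nb W B W B R B B B W B, R),
    (W, nb R B W W B B R W B B, W),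
    (B, nb R W W W B R W W W W, B)] := by
  decide
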